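/- arXiv:1712.04183 — 2 statements merged into one kernel-verified Lean document; each statement's English description precedes it below -/
import Mathlib

section
/- Consider a single round-robin group with team set {a,b,c} and the complete set of results v given by: a beats c 4-0, b beats a 1-0, c beats b 2-0. Then each of a, b, c has exactly one win and one loss, hence the number of points α+β for each team; the goal differences of a, b, c are 3, −1, −2 respectively; the head-to-head number of points of each team with respect to the other two tied teams equals α+β; and for every monotonic ranking method R, the strict order R(v) ranks a above b, b above c, and a above c. -/
/-!
A single round-robin group: every pair of distinct teams plays exactly one
match; `v x y = (p, q)` records the goals scored by `x` and by `y` in their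
match (so `v y x = (q, p)`), and no match ends in a draw.
-/

open Finset

section Defs

variable {T : Type*} [DecidableEq T] [Fintype T]

/-- Number of wins of `x` in its matches against the teams of `L`. -/
def winsIn (v : T → T → ℕ × ℕ) (L : Finset T) (x : T) : ℕ :=
  (L.filter fun y => y ≠ x ∧ (v x y).2 < (v x y).1).card

/-- Number of losses of `x` in its matches against the teams of `L`. -/
def lossesIn (v : T → T → ℕ × ℕ) (L : Finset T) (x : T) : ℕ :=
  (L.filter fun y => y ≠ x ∧ (v x y).1 < (v x y).2).card

/-- Number of points of `x` computed from its matches against the teams of `L`: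
`α` points per win and `β` points per loss.  For `L = Finset.univ` this is the
number of points `s_v(x)`; for `L ⊆ X \ {x}` it is the head-to-head number of
points `s_v^L(x)`. -/
def ptsIn (α β : ℤ) (v : T → T → ℕ × ℕ) (L : Finset T) (x : T) : ℤ :=
  α * winsIn v L x + β * lossesIn v L x

/-- Goal difference of `x` computed from its matches against the teams of `L`
(goals scored minus goals conceded).  For `L = Finset.univ` this is `gd_v(x)`;
for `L ⊆ X \ {x}` it is the head-to-head goal difference `gd_v^L(x)`. -/
def gdIn (v : T → T → ℕ × ℕ) (L : Finset T) (x : T) : ℤ :=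
  ∑ y ∈ L.filter (fun y => y ≠ x), (((v x y).1 : ℤ) - ((v x y).2 : ℤ))

/-- The set of all teams with the same (total) number of points as `x`. -/
def tied (α β : ℤ) (v : T → T → ℕ × ℕ) (x : T) : Finset T :=
  univ.filter fun z => ptsIn α β v univ z = ptsIn α β v univ x

/-- `x` head-to-head dominates `y`: they have the same total number of points
and, with respect to the set `L` of all teams with this number of points, `x`
has strictly more head-to-head points than `y`, or equally many head-to-head
points and a strictly greater head-to-head goal difference. -/
def Dominates (α β : ℤ) (v : T → T → ℕ × ℕ) (x y : T) : Prop :=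
  ptsIn α β v univ x = ptsIn α β v univ y ∧
    (ptsIn α β v (tied α β v x) x > ptsIn α β v (tied α β v x) y ∨
      (ptsIn α β v (tied α β v x) x = ptsIn α β v (tied α β v x) y ∧
        gdIn v (tied α β v x) x > gdIn v (tied α β v x) y))

/-- The ranking `r` (a strict order on the teams) is monotonic with respect to
the complete result set `v`: (1) strictly more points implies a strictly higher
rank; (2) equal points together with a strictly greater goal difference and
head-to-head domination imply a strictly higher rank. -/
def Monotonic (α β : ℤ) (v : T → T → ℕ × ℕ) (r : T → T → Prop) : Prop :=
  (∀ x y : T, ptsIn α β v univ x > ptsIn α β v univ y → r x y) ∧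
    (∀ x y : T, ptsIn α β v univ x = ptsIn α β v univ y →
      gdIn v univ x > gdIn v univ y → Dominates α β v x y → r x y)

end Defs

/-- The results of Example 3.1 on teams `a = 0`, `b = 1`, `c = 2`:
`a` beats `c` 4-0, `b` beats `a` 1-0, `c` beats `b` 2-0. -/
def vEx : Fin 3 → Fin 3 → ℕ × ℕ :=
  ![![(0, 0), (0, 1), (4, 0)],
    ![(1, 0), (0, 0), (0, 2)],
    ![(0, 4), (2, 0), (0, 0)]]

/-- The manipulated results of Example 3.1 on teams `a = 0`, `b = 1`, `c = 2`:
`a` beats `c` only 2-0, `b` beats `a` 1-0, `c` beats `b` 2-0. -/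
def vEx' : Fin 3 → Fin 3 → ℕ × ℕ :=
  ![![(0, 0), (0, 1), (2, 0)],
    ![(1, 0), (0, 0), (0, 2)],
    ![(0, 2), (2, 0), (0, 0)]]

lemma winsEx : ∀ x : Fin 3, winsIn vEx Finset.univ x = 1 := by decide

lemma lossesEx : ∀ x : Fin 3, lossesIn vEx Finset.univ x = 1 := by decide

lemma ptsEx (α β : ℤ) (x : Fin 3) : ptsIn α β vEx Finset.univ x = α + β := by
  simp [ptsIn, winsEx, lossesEx]

lemma tiedEx (α β : ℤ) (x : Fin 3) : tied α β vEx x = Finset.univ := by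
  ext z
  simp [tied, ptsEx]

lemma gdEx : gdIn vEx Finset.univ 0 = 3 ∧ gdIn vEx Finset.univ 1 = -1 ∧
    gdIn vEx Finset.univ 2 = -2 := by decide

lemma winsErase : ∀ x : Fin 3, winsIn vEx (Finset.univ.erase x) x = 1 := by decide
lemma lossesErase : ∀ x : Fin 3, lossesIn vEx (Finset.univ.erase x) x = 1 := by decide

/-- **Example 3.1, benchmark results.** Under `vEx` (`a` beats `c` 4-0, `b`
beats `a` 1-0, `c` beats `b` 2-0): each team has exactly one win and one loss,
hence `α + β` points; the goal differences of `a`, `b`, `c` are `3`, `-1`, `-2`;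
the head-to-head number of points of each team with respect to the other two
(tied) teams is `α + β`; and every monotonic ranking method (yielding a strict
total order) ranks `a` above `b`, `b` above `c` and `a` above `c`. -/
theorem example31_benchmark (α β : ℤ) (hαβ : β < α) :
    (∀ x : Fin 3, winsIn vEx Finset.univ x = 1 ∧ lossesIn vEx Finset.univ x = 1 ∧
      ptsIn α β vEx Finset.univ x = α + β) ∧
    (gdIn vEx Finset.univ 0 = 3 ∧ gdIn vEx Finset.univ 1 = -1 ∧
      gdIn vEx Finset.univ 2 = -2) ∧
    (∀ x : Fin 3, ptsIn α β vEx (Finset.univ.erase x) x = α + β) ∧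
    (∀ r : Fin 3 → Fin 3 → Prop,
      (∀ x, ¬r x x) → (∀ x y z, r x y → r y z → r x z) →
      (∀ x y, x ≠ y → r x y ∨ r y x) → Monotonic α β vEx r →
      r 0 1 ∧ r 1 2 ∧ r 0 2) := by
  refine ⟨fun x => ⟨winsEx x, lossesEx x, ptsEx α β x⟩, gdEx,
    fun x => by simp [ptsIn, winsErase, lossesErase], ?_⟩
  intro r _ htrans _ ⟨_, hmon2⟩
  have hdom : ∀ x y : Fin 3, gdIn vEx Finset.univ x > gdIn vEx Finset.univ y →
      r x y := by
    intro x y hgd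
    refine hmon2 x y ((ptsEx α β x).trans (ptsEx α β y).symm) hgd ?_
    refine ⟨(ptsEx α β x).trans (ptsEx α β y).symm, Or.inr ?_⟩
    rw [tiedEx]
    exact ⟨(ptsEx α β x).trans (ptsEx α β y).symm, hgd⟩
  obtain ⟨g0, g1, g2⟩ := gdEx
  have h01 : r 0 1 := hdom 0 1 (by rw [g0, g1]; norm_num)
  have h12 : r 1 2 := hdom 1 2 (by rw [g1, g2]; norm_num)
  exact ⟨h01, h12, htrans _ _ _ h01 h12⟩
end

section
/- Consider a single round-robin group with team set {a,b,c} and the complete set of results v̄ given by: a beats c 2-0, b beats a 1-0, c beats b 2-0. Then each of a, b, c has exactly one win and one loss, hence the number of points α+β for each team; the goal differences of a, b, c are 1, −1, 0 respectively; and for every monotonic ranking method R, the strict order R(v̄) ranks a above c, c above b, and a above b. -/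
/-!
A single round-robin group: every pair of distinct teams plays exactly one
match; `v x y = (p, q)` records the goals scored by `x` and by `y` in their
match (so `v y x = (q, p)`), and no match ends in a draw.
-/

open Finset

/-- **Example 3.1, manipulated results.** Under `vEx'` (`a` beats `c` 2-0, `b`
beats `a` 1-0, `c` beats `b` 2-0): each team has exactly one win and one loss,
hence `α + β` points; the goal differences of `a`, `b`, `c` are `1`, `-1`, `0`;
and every monotonic ranking method (yielding a strict total order) ranks `a`
above `c`, `c` above `b` and `a` above `b`. -/
theorem example31_manipulated (α β : ℤ) (hαβ : β < α) :
    (∀ x : Fin 3, winsIn vEx' Finset.univ x = 1 ∧ lossesIn vEx' Finset.univ x = 1 ∧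
      ptsIn α β vEx' Finset.univ x = α + β) ∧
    (gdIn vEx' Finset.univ 0 = 1 ∧ gdIn vEx' Finset.univ 1 = -1 ∧
      gdIn vEx' Finset.univ 2 = 0) ∧
    (∀ r : Fin 3 → Fin 3 → Prop,
      (∀ x, ¬r x x) → (∀ x y z, r x y → r y z → r x z) →
      (∀ x y, x ≠ y → r x y ∨ r y x) → Monotonic α β vEx' r →
      r 0 2 ∧ r 2 1 ∧ r 0 1) := by

  have hw : ∀ x : Fin 3, winsIn vEx' Finset.univ x = 1 := by decide
  have hl : ∀ x : Fin 3, lossesIn vEx' Finset.univ x = 1 := by decide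
  have hp : ∀ x : Fin 3, ptsIn α β vEx' Finset.univ x = α + β := by
    intro x; simp [ptsIn, hw x, hl x]
  have hgd : gdIn vEx' Finset.univ 0 = 1 ∧ gdIn vEx' Finset.univ 1 = -1 ∧
      gdIn vEx' Finset.univ 2 = 0 := by refine ⟨?_, ?_, ?_⟩ <;> decide
  have htied : ∀ x : Fin 3, tied α β vEx' x = Finset.univ := by
    intro x
    ext z
    simp [tied, hp]
  have hdom : ∀ x y : Fin 3, gdIn vEx' Finset.univ x > gdIn vEx' Finset.univ y →
      Dominates α β vEx' x y := by
    intro x y h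
    refine ⟨by rw [hp, hp], Or.inr ⟨by rw [htied, hp, hp], by rwa [htied]⟩⟩
  refine ⟨fun x => ⟨hw x, hl x, hp x⟩, hgd, fun r hirr htr htot hmono => ?_⟩
  obtain ⟨g0, g1, g2⟩ := hgd
  have h02 : r 0 2 := hmono.2 0 2 (by rw [hp, hp]) (by rw [g0, g2]; norm_num)
    (hdom 0 2 (by rw [g0, g2]; norm_num))
  have h21 : r 2 1 := hmono.2 2 1 (by rw [hp, hp]) (by rw [g2, g1]; norm_num)
    (hdom 2 1 (by rw [g2, g1]; norm_num))
  exact ⟨h02, h21, htr _ _ _ h02 h21⟩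
end
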